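/- Let f : ℝ² → ℍ be integrable. Then for all x1, x2 ∈ ℝ and all s1, s2 > 0, the filtered signal f_Q satisfies the right Cauchy–Riemann equation in the pair (x2, s2): (∂/∂x2) f_Q(x1,x2,s1,s2) + ((∂/∂s2) f_Q(x1,x2,s1,s2)) · j = 0. -/

import Mathlib

open MeasureTheory Real Filter
open scoped Quaternion ENNReal

/-- The quaternion imaginary unit `i`. -/
noncomputable def qi : ℍ[ℝ] := ⟨0, 1, 0, 0⟩

/-- The quaternion imaginary unit `j`. -/
noncomputable def qj : ℍ[ℝ] := ⟨0, 0, 1, 0⟩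

/-- `exp (i t) = cos t + i sin t` as a quaternion. -/
noncomputable def expI (t : ℝ) : ℍ[ℝ] := ⟨Real.cos t, Real.sin t, 0, 0⟩

/-- `exp (j t) = cos t + j sin t` as a quaternion. -/
noncomputable def expJ (t : ℝ) : ℍ[ℝ] := ⟨Real.cos t, 0, Real.sin t, 0⟩

/-- The two-sided quaternion Fourier transform of `f : ℝ² → ℍ`:
`F[f](w₁,w₂) = (1/(2π)) ∫ exp(-i w₁ x₁) f(x) exp(-j w₂ x₂) dx`. -/
noncomputable def QFT (f : ℝ × ℝ → ℍ[ℝ]) (w₁ w₂ : ℝ) : ℍ[ℝ] :=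
  (1 / (2 * π)) • ∫ x : ℝ × ℝ, expI (-(w₁ * x.1)) * f x * expJ (-(w₂ * x.2))

/-- The quaternion Hardy filter system function
`H₃(w₁,w₂,s₁,s₂) = e^{-|w₁|s₁} e^{-|w₂|s₂} (1+sgn w₁)(1+sgn w₂)`. -/
noncomputable def H3 (w₁ w₂ s₁ s₂ : ℝ) : ℝ :=
  Real.exp (-|w₁| * s₁) * Real.exp (-|w₂| * s₂) * (1 + Real.sign w₁) * (1 + Real.sign w₂)

/-- The filtered signal `f_Q(x₁,x₂,s₁,s₂) =
(1/(2π)) ∫ exp(i w₁ x₁) H₃(w₁,w₂,s₁,s₂) F[f](w₁,w₂) exp(j w₂ x₂) dw`. -/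
noncomputable def fQ (f : ℝ × ℝ → ℍ[ℝ]) (x₁ x₂ s₁ s₂ : ℝ) : ℍ[ℝ] :=
  (1 / (2 * π)) • ∫ w : ℝ × ℝ,
    expI (w.1 * x₁) * (H3 w.1 w.2 s₁ s₂ • QFT f w.1 w.2) * expJ (w.2 * x₂)


/-! The Cauchy–Riemann operator `∂/∂x₂ + (∂/∂s₂) j` can be taken under the integral defining `f_Q`:
for `s₁, s₂ > 0` the filter `H₃` decays exponentially, uniformly for `s₂` near a positive value,
while `w ↦ exp(i w₁ x₁) F[f](w)` is bounded and continuous. The operator then falls on the kernel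
`H₃ · exp(j w₂ x₂)`, which vanishes for `w₂ < 0` and, for `w₂ ≥ 0`, depends on `(x₂, s₂)` only
through `e^{-w₂ s₂} exp(j w₂ x₂) = exp(j w₂ (x₂ + j s₂))`; this is annihilated pointwise. -/

open Set Topology

lemma Quaternion.norm_eq_one_of_normSq_eq_one {q : ℍ[ℝ]} (h : Quaternion.normSq q = 1) :
    ‖q‖ = 1 := by
  have : ‖q‖ * ‖q‖ = 1 := by rw [← Quaternion.normSq_eq_norm_mul_self, h]
  nlinarith [norm_nonneg q]

lemma norm_expI (t : ℝ) : ‖expI t‖ = 1 :=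
  Quaternion.norm_eq_one_of_normSq_eq_one <| by
    rw [Quaternion.normSq_def']; simp [expI]

lemma norm_expJ (t : ℝ) : ‖expJ t‖ = 1 :=
  Quaternion.norm_eq_one_of_normSq_eq_one <| by
    rw [Quaternion.normSq_def']; simp [expJ]

lemma norm_qj : ‖qj‖ = 1 :=
  Quaternion.norm_eq_one_of_normSq_eq_one <| by
    rw [Quaternion.normSq_def']; simp [qj]

lemma expI_eq (t : ℝ) : expI t = Real.cos t • (1 : ℍ[ℝ]) + Real.sin t • qi := by
  ext <;> simp <;> simp [expI, qi]

lemma expJ_eq (t : ℝ) : expJ t = Real.cos t • (1 : ℍ[ℝ]) + Real.sin t • qj := by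
  ext <;> simp <;> simp [expJ, qj]

@[fun_prop]
lemma continuous_expI : Continuous expI := by
  simp only [funext expI_eq]; fun_prop

@[fun_prop]
lemma continuous_expJ : Continuous expJ := by
  simp only [funext expJ_eq]; fun_prop

lemma qj_mul_qj : qj * qj = -1 := by
  ext <;> simp [Quaternion.re_mul, Quaternion.imI_mul, Quaternion.imJ_mul, Quaternion.imK_mul] <;>
    simp [qj]

lemma hasDerivAt_expJ (t : ℝ) : HasDerivAt expJ (expJ t * qj) t := by
  have h := ((Real.hasDerivAt_cos t).smul_const (1 : ℍ[ℝ])).add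
    ((Real.hasDerivAt_sin t).smul_const qj)
  rw [show expJ = fun t => Real.cos t • (1 : ℍ[ℝ]) + Real.sin t • qj from funext expJ_eq]
  refine h.congr_deriv ?_
  rw [add_mul, smul_mul_assoc, smul_mul_assoc, one_mul, qj_mul_qj]
  module

lemma norm_QFT_le (f : ℝ × ℝ → ℍ[ℝ]) (w₁ w₂ : ℝ) :
    ‖QFT f w₁ w₂‖ ≤ 1 / (2 * π) * ∫ x, ‖f x‖ := by
  rw [QFT, norm_smul, Real.norm_of_nonneg (by positivity)]
  gcongr
  refine (norm_integral_le_integral_norm _).trans_eq (integral_congr_ae ?_)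
  filter_upwards with x
  rw [norm_mul, norm_mul, norm_expI, norm_expJ, one_mul, mul_one]

lemma continuous_QFT {f : ℝ × ℝ → ℍ[ℝ]} (hf : Integrable f) :
    Continuous fun w : ℝ × ℝ => QFT f w.1 w.2 := by
  refine (continuous_of_dominated (bound := fun x => ‖f x‖) (fun w => ?_) (fun w => ?_) hf.norm
    (ae_of_all _ fun x => by fun_prop)).const_smul (1 / (2 * π))
  · exact ((continuous_expI.comp (by fun_prop)).aestronglyMeasurable.mul hf.1).mul
      (continuous_expJ.comp (by fun_prop)).aestronglyMeasurable
  · filter_upwards with x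
    rw [norm_mul, norm_mul, norm_expI, norm_expJ, one_mul, mul_one]

lemma one_add_sign_nonneg (r : ℝ) : 0 ≤ 1 + Real.sign r := by
  rcases Real.sign_apply_eq r with h | h | h <;> rw [h] <;> norm_num

lemma one_add_sign_le_two (r : ℝ) : 1 + Real.sign r ≤ 2 := by
  rcases Real.sign_apply_eq r with h | h | h <;> rw [h] <;> norm_num

@[fun_prop]
lemma Real.measurable_sign : Measurable Real.sign :=
  Measurable.ite measurableSet_Iio measurable_const
    (Measurable.ite measurableSet_Ioi measurable_const measurable_const)

lemma measurable_H3 (s₁ s₂ : ℝ) : Measurable fun w : ℝ × ℝ => H3 w.1 w.2 s₁ s₂ := by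
  unfold H3
  fun_prop

lemma H3_nonneg (w₁ w₂ s₁ s₂ : ℝ) : 0 ≤ H3 w₁ w₂ s₁ s₂ := by
  unfold H3
  have := one_add_sign_nonneg w₁
  have := one_add_sign_nonneg w₂
  positivity

lemma H3_le {w₁ w₂ s₁ s₂ s : ℝ} (hs : s ≤ s₂) :
    H3 w₁ w₂ s₁ s₂ ≤ 4 * (Real.exp (-|w₁| * s₁) * Real.exp (-|w₂| * s)) := by
  have h₁ := one_add_sign_le_two w₁
  have h₂ := one_add_sign_le_two w₂
  have : Real.exp (-|w₂| * s₂) ≤ Real.exp (-|w₂| * s) :=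
    Real.exp_le_exp.2 (by nlinarith [abs_nonneg w₂])
  calc H3 w₁ w₂ s₁ s₂ ≤ Real.exp (-|w₁| * s₁) * Real.exp (-|w₂| * s) * 2 * 2 := by
        unfold H3
        gcongr <;> exact one_add_sign_nonneg _
    _ = _ := by ring

lemma H3_of_neg (w₁ : ℝ) {w₂ : ℝ} (h : w₂ < 0) (s₁ s₂ : ℝ) : H3 w₁ w₂ s₁ s₂ = 0 := by
  rw [H3, Real.sign_of_neg h]
  ring

lemma hasDerivAt_H3 (w₁ w₂ s₁ s₂ : ℝ) :
    HasDerivAt (H3 w₁ w₂ s₁) (-|w₂| * H3 w₁ w₂ s₁ s₂) s₂ := by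
  have h := (((hasDerivAt_id s₂).const_mul (-|w₂|)).exp).const_mul
    (Real.exp (-|w₁| * s₁) * (1 + Real.sign w₁) * (1 + Real.sign w₂))
  rw [show H3 w₁ w₂ s₁ = fun s => Real.exp (-|w₁| * s₁) * (1 + Real.sign w₁) *
      (1 + Real.sign w₂) * Real.exp (-|w₂| * id s) from funext fun s => by rw [H3, id]; ring]
  refine h.congr_deriv ?_
  simp only [id]
  ring

lemma integrable_abs_pow_mul_exp_neg_abs_mul (n : ℕ) {s : ℝ} (hs : 0 < s) :
    Integrable fun x : ℝ => |x| ^ n * Real.exp (-|x| * s) := by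
  have hIoi : IntegrableOn (fun x : ℝ => |x| ^ n * Real.exp (-|x| * s)) (Ioi 0) := by
    refine (integrableOn_rpow_mul_exp_neg_mul_rpow (p := 1) (s := n)
      (neg_one_lt_zero.trans_le n.cast_nonneg) one_pos hs).congr_fun (fun x hx => ?_)
      measurableSet_Ioi
    simp only [Real.rpow_one, Real.rpow_natCast]
    rw [abs_of_pos (mem_Ioi.1 hx), neg_mul, neg_mul, mul_comm s x]
  rw [← integrableOn_univ, ← Iio_union_Ici (a := (0 : ℝ)), integrableOn_union,
    integrableOn_Ici_iff_integrableOn_Ioi]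
  refine ⟨?_, hIoi⟩
  rw [← (Measure.measurePreserving_neg (volume : Measure ℝ)).integrableOn_comp_preimage
    (Homeomorph.neg ℝ).measurableEmbedding]
  simpa only [Function.comp_def, abs_neg, neg_preimage, neg_Iio, neg_zero] using hIoi

lemma integrable_abs_snd_pow_mul_H3_bound (n : ℕ) {s₁ s : ℝ} (hs₁ : 0 < s₁) (hs : 0 < s) :
    Integrable fun w : ℝ × ℝ =>
      |w.2| ^ n * (4 * (Real.exp (-|w.1| * s₁) * Real.exp (-|w.2| * s))) := by
  rw [Measure.volume_eq_prod]
  refine (((integrable_abs_pow_mul_exp_neg_abs_mul 0 hs₁).mul_prod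
    (integrable_abs_pow_mul_exp_neg_abs_mul n hs)).const_mul 4).congr (ae_of_all _ fun w => ?_)
  dsimp only
  ring

noncomputable def hardyKernel (s₁ x₂ s₂ : ℝ) (w : ℝ × ℝ) : ℍ[ℝ] :=
  H3 w.1 w.2 s₁ s₂ • expJ (w.2 * x₂)

section hardyKernel

variable {s₁ x₂ s₂ : ℝ}

lemma stronglyMeasurable_hardyKernel (s₁ x₂ s₂ : ℝ) :
    StronglyMeasurable (hardyKernel s₁ x₂ s₂) :=
  (measurable_H3 s₁ s₂).stronglyMeasurable.smul
    (continuous_expJ.comp (by fun_prop)).stronglyMeasurable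

lemma norm_hardyKernel_le {s : ℝ} (hs : s ≤ s₂) (w : ℝ × ℝ) :
    ‖hardyKernel s₁ x₂ s₂ w‖ ≤ 4 * (Real.exp (-|w.1| * s₁) * Real.exp (-|w.2| * s)) := by
  rw [hardyKernel, norm_smul, norm_expJ, mul_one, Real.norm_of_nonneg (H3_nonneg ..)]
  exact H3_le hs

lemma integrable_hardyKernel (hs₁ : 0 < s₁) (hs₂ : 0 < s₂) :
    Integrable (hardyKernel s₁ x₂ s₂) :=
  (integrable_abs_snd_pow_mul_H3_bound 0 hs₁ hs₂).mono'
    (stronglyMeasurable_hardyKernel s₁ x₂ s₂).aestronglyMeasurable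
    (ae_of_all _ fun w => by simpa using norm_hardyKernel_le le_rfl w)

lemma hasDerivAt_hardyKernel_left (w : ℝ × ℝ) :
    HasDerivAt (fun t => hardyKernel s₁ t s₂ w) (w.2 • (hardyKernel s₁ x₂ s₂ w * qj)) x₂ := by
  have h := ((hasDerivAt_expJ (w.2 * x₂)).scomp x₂
    ((hasDerivAt_id x₂).const_mul w.2)).const_smul (H3 w.1 w.2 s₁ s₂)
  simp only [Function.comp_def, mul_one] at h
  rw [hardyKernel, smul_mul_assoc, smul_comm]
  exact h

lemma hasDerivAt_hardyKernel_right (w : ℝ × ℝ) :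
    HasDerivAt (fun s => hardyKernel s₁ x₂ s w) (-|w.2| • hardyKernel s₁ x₂ s₂ w) s₂ := by
  rw [hardyKernel, smul_smul]
  exact (hasDerivAt_H3 w.1 w.2 s₁ s₂).smul_const (expJ (w.2 * x₂))

lemma hardyKernel_cauchyRiemann (w : ℝ × ℝ) :
    w.2 • (hardyKernel s₁ x₂ s₂ w * qj) + (-|w.2| • hardyKernel s₁ x₂ s₂ w) * qj = 0 := by
  rcases lt_or_ge w.2 0 with hw | hw
  · simp [hardyKernel, H3_of_neg w.1 hw]
  · rw [abs_of_nonneg hw, neg_smul, neg_mul, smul_mul_assoc, add_neg_cancel]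

end hardyKernel

theorem hasDerivAt_integral_mul_of_dominated {α A : Type*} [MeasurableSpace α] {μ : Measure α}
    [NormedRing A] [NormedAlgebra ℝ A] [CompleteSpace A] {g : α → A} {C : ℝ}
    (hg : AEStronglyMeasurable g μ) (hgC : ∀ᵐ a ∂μ, ‖g a‖ ≤ C)
    {F F' : ℝ → α → A} {t₀ : ℝ} {s : Set ℝ} {bound : α → ℝ} (hs : s ∈ 𝓝 t₀)
    (hF_meas : ∀ t, AEStronglyMeasurable (F t) μ) (hF_int : Integrable (F t₀) μ)
    (hF'_meas : AEStronglyMeasurable (F' t₀) μ)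
    (h_bound : ∀ᵐ a ∂μ, ∀ t ∈ s, ‖F' t a‖ ≤ bound a) (bound_integrable : Integrable bound μ)
    (h_diff : ∀ᵐ a ∂μ, ∀ t ∈ s, HasDerivAt (F · a) (F' t a) t) :
    Integrable (fun a => g a * F' t₀ a) μ ∧
      HasDerivAt (fun t => ∫ a, g a * F t a ∂μ) (∫ a, g a * F' t₀ a ∂μ) t₀ := by
  refine hasDerivAt_integral_of_dominated_loc_of_deriv_le (F' := fun t a => g a * F' t a)
    (bound := fun a => C * bound a) hs
    (Eventually.of_forall fun t => hg.mul (hF_meas t)) (hF_int.bdd_mul hg hgC) (hg.mul hF'_meas)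
    ?_ (bound_integrable.const_mul C) ?_
  · filter_upwards [hgC, h_bound] with a hga hFa t ht
    exact (norm_mul_le _ _).trans
      (mul_le_mul hga (hFa t ht) (norm_nonneg _) ((norm_nonneg _).trans hga))
  · filter_upwards [h_diff] with a ha t ht
    exact (ha t ht).const_mul (g a)

section integral_mul_hardyKernel

variable {g : ℝ × ℝ → ℍ[ℝ]} {C s₁ s₂ : ℝ}

lemma hasDerivAt_integral_mul_hardyKernel_left (hg : AEStronglyMeasurable g)
    (hgC : ∀ w, ‖g w‖ ≤ C) (hs₁ : 0 < s₁) (hs₂ : 0 < s₂) (x₂ : ℝ) :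
    Integrable (fun w => g w * (w.2 • (hardyKernel s₁ x₂ s₂ w * qj))) ∧
      HasDerivAt (fun t => ∫ w, g w * hardyKernel s₁ t s₂ w)
        (∫ w, g w * (w.2 • (hardyKernel s₁ x₂ s₂ w * qj))) x₂ := by
  have hK := fun t => (stronglyMeasurable_hardyKernel s₁ t s₂).aestronglyMeasurable (μ := volume)
  have h_bound (w : ℝ × ℝ) (t : ℝ) : ‖w.2 • (hardyKernel s₁ t s₂ w * qj)‖ ≤
      |w.2| ^ 1 * (4 * (Real.exp (-|w.1| * s₁) * Real.exp (-|w.2| * s₂))) := by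
    rw [norm_smul, norm_mul, norm_qj, mul_one, pow_one, Real.norm_eq_abs]
    exact mul_le_mul_of_nonneg_left (norm_hardyKernel_le le_rfl w) (abs_nonneg _)
  exact hasDerivAt_integral_mul_of_dominated (F := fun t => hardyKernel s₁ t s₂)
    (F' := fun t w => w.2 • (hardyKernel s₁ t s₂ w * qj)) hg (ae_of_all _ hgC) univ_mem hK
    (integrable_hardyKernel hs₁ hs₂)
    (continuous_snd.aestronglyMeasurable.smul ((hK x₂).mul_const qj))
    (ae_of_all _ fun w t _ => h_bound w t) (integrable_abs_snd_pow_mul_H3_bound 1 hs₁ hs₂)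
    (ae_of_all _ fun w t _ => hasDerivAt_hardyKernel_left w)

lemma hasDerivAt_integral_mul_hardyKernel_right (hg : AEStronglyMeasurable g)
    (hgC : ∀ w, ‖g w‖ ≤ C) (hs₁ : 0 < s₁) (hs₂ : 0 < s₂) (x₂ : ℝ) :
    Integrable (fun w => g w * (-|w.2| • hardyKernel s₁ x₂ s₂ w)) ∧
      HasDerivAt (fun s => ∫ w, g w * hardyKernel s₁ x₂ s w)
        (∫ w, g w * (-|w.2| • hardyKernel s₁ x₂ s₂ w)) s₂ := by
  have hK := fun s => (stronglyMeasurable_hardyKernel s₁ x₂ s).aestronglyMeasurable (μ := volume)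
  have h_bound (w : ℝ × ℝ) (s : ℝ) (hs : s ∈ Ioi (s₂ / 2)) : ‖-|w.2| • hardyKernel s₁ x₂ s w‖ ≤
      |w.2| ^ 1 * (4 * (Real.exp (-|w.1| * s₁) * Real.exp (-|w.2| * (s₂ / 2)))) := by
    rw [norm_smul, norm_neg, Real.norm_eq_abs, abs_abs, pow_one]
    exact mul_le_mul_of_nonneg_left (norm_hardyKernel_le (le_of_lt hs) w) (abs_nonneg _)
  exact hasDerivAt_integral_mul_of_dominated (F := fun s => hardyKernel s₁ x₂ s)
    (F' := fun s w => -|w.2| • hardyKernel s₁ x₂ s w) hg (ae_of_all _ hgC)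
    (Ioi_mem_nhds (half_lt_self hs₂)) hK (integrable_hardyKernel hs₁ hs₂)
    ((continuous_snd.abs.neg).aestronglyMeasurable.smul (hK s₂)) (ae_of_all _ h_bound)
    (integrable_abs_snd_pow_mul_H3_bound 1 hs₁ (half_pos hs₂))
    (ae_of_all _ fun w s _ => hasDerivAt_hardyKernel_right w)

end integral_mul_hardyKernel

lemma fQ_eq_integral_mul_hardyKernel (f : ℝ × ℝ → ℍ[ℝ]) (x₁ x₂ s₁ s₂ : ℝ) :
    fQ f x₁ x₂ s₁ s₂ =
      (1 / (2 * π)) • ∫ w, (expI (w.1 * x₁) * QFT f w.1 w.2) * hardyKernel s₁ x₂ s₂ w := by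
  simp only [fQ, hardyKernel, mul_smul_comm, smul_mul_assoc, mul_assoc]

/-- For integrable `f : ℝ² → ℍ`, the filtered signal `f_Q` satisfies the
right Cauchy–Riemann equation in the pair `(x₂, s₂)`:
`∂f_Q/∂x₂ + (∂f_Q/∂s₂) j = 0` for all `x₁ x₂` and `s₁, s₂ > 0`. -/
theorem fQ_right_cauchy_riemann (f : ℝ × ℝ → ℍ[ℝ]) (hf : Integrable f)
    (x₁ x₂ s₁ s₂ : ℝ) (hs₁ : 0 < s₁) (hs₂ : 0 < s₂) :
    deriv (fun t => fQ f x₁ t s₁ s₂) x₂ + deriv (fun t => fQ f x₁ x₂ s₁ t) s₂ * qj = 0 := by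
  set g : ℝ × ℝ → ℍ[ℝ] := fun w => expI (w.1 * x₁) * QFT f w.1 w.2
  have hg : AEStronglyMeasurable g :=
    ((continuous_expI.comp (by fun_prop)).mul (continuous_QFT hf)).aestronglyMeasurable
  have hgC (w : ℝ × ℝ) : ‖g w‖ ≤ 1 / (2 * π) * ∫ x, ‖f x‖ := by
    simpa only [g, norm_mul, norm_expI, one_mul] using norm_QFT_le f w.1 w.2
  obtain ⟨hint_left, hderiv_left⟩ := hasDerivAt_integral_mul_hardyKernel_left hg hgC hs₁ hs₂ x₂
  obtain ⟨hint_right, hderiv_right⟩ :=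
    hasDerivAt_integral_mul_hardyKernel_right hg hgC hs₁ hs₂ x₂
  have h_left : HasDerivAt (fun t => fQ f x₁ t s₁ s₂)
      ((1 / (2 * π)) • ∫ w, g w * (w.2 • (hardyKernel s₁ x₂ s₂ w * qj))) x₂ := by
    simp only [fQ_eq_integral_mul_hardyKernel]
    exact hderiv_left.const_smul (1 / (2 * π) : ℝ)
  have h_right : HasDerivAt (fun s => fQ f x₁ x₂ s₁ s)
      ((1 / (2 * π)) • ∫ w, g w * (-|w.2| • hardyKernel s₁ x₂ s₂ w)) s₂ := by
    simp only [fQ_eq_integral_mul_hardyKernel]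
    exact hderiv_right.const_smul (1 / (2 * π) : ℝ)
  rw [h_left.deriv, h_right.deriv, smul_mul_assoc, ← smul_add,
    ← integral_mul_const_of_integrable hint_right,
    ← integral_add hint_left (hint_right.mul_const qj)]
  simp only [mul_assoc, ← mul_add, hardyKernel_cauchyRiemann, mul_zero, integral_zero, smul_zero]
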